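/- Let R be a commutative ring, A a t-pgg graded R-algebra (t ≥ 1), and R → R' a homomorphism of commutative rings. Then the graded R'-algebra A ⊗_R R', with grading whose degree-n component is the image of 𝒜 n ⊗_R R' in A ⊗_R R', is a t-pgg R'-algebra. -/

import Mathlib

/-!
Partially generated graded algebras (pgg).

A graded `R`-algebra `A` (grading `𝒜 : ℕ → Submodule R A`) is `t`-pgg if the evaluation
map from the (weighted) polynomial ring on variables `X_(i,a)` (`1 ≤ i ≤ t`, `a ∈ 𝒜 i`,
`X_(i,a)` of weight `i`) sending `X_(i,a) ↦ a` is surjective and its kernel is generated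
by weighted-homogeneous polynomials of weighted degree at most `t`.
-/

open MvPolynomial

/-- The variables `X_(i,a)` for `1 ≤ i ≤ t` and `a ∈ 𝒜 i`. -/
abbrev PggVars {R A : Type*} [CommRing R] [CommRing A] [Algebra R A]
    (𝒜 : ℕ → Submodule R A) (t : ℕ) : Type _ :=
  Σ i : Set.Icc 1 t, 𝒜 (i : ℕ)

/-- The weight of the variable `X_(i,a)` is `i`. -/
def pggWeight {R A : Type*} [CommRing R] [CommRing A] [Algebra R A]
    (𝒜 : ℕ → Submodule R A) (t : ℕ) : PggVars 𝒜 t → ℕ :=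
  fun v => (v.1 : ℕ)

/-- The evaluation homomorphism `ev_t`, sending `X_(i,a)` to `a`. -/
noncomputable def pggEval {R A : Type*} [CommRing R] [CommRing A] [Algebra R A]
    (𝒜 : ℕ → Submodule R A) (t : ℕ) :
    MvPolynomial (PggVars 𝒜 t) R →ₐ[R] A :=
  aeval fun v => (v.2 : A)

/-- `A` is a `t`-partially generated graded (`t`-pgg) `R`-algebra: `ev_t` is surjective and
its kernel is generated by weighted-homogeneous polynomials of weighted degree at most `t`. -/
def IsPgg {R A : Type*} [CommRing R] [CommRing A] [Algebra R A]
    (𝒜 : ℕ → Submodule R A) (t : ℕ) : Prop :=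
  Function.Surjective (pggEval 𝒜 t) ∧
  ∃ S : Set (MvPolynomial (PggVars 𝒜 t) R),
    (∀ p ∈ S, ∃ n ≤ t, p.IsWeightedHomogeneous (pggWeight 𝒜 t) n) ∧
    RingHom.ker (pggEval 𝒜 t) = Ideal.span S

/-!
Base change along `R → R'` turns the presentation of `A` by the variables `X_(i,a)` into a
presentation of `R' ⊗[R] A` by the same variables, the relations being mapped coefficientwise.
The pgg variables of `R' ⊗[R] A` are more numerous, but they are redundant: an element `x` of
degree `i` is an `R'`-combination `Σ c_k (1 ⊗ a_k)` with `a_k ∈ 𝒜 i`, and adjoining `X_(i,x)`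
together with the relation `X_(i,x) - Σ c_k X_(i,a_k)`, homogeneous of weight `i ≤ t`, does not
change the quotient.
-/

open TensorProduct

namespace Finsupp

theorem weight_mapDomain {σ τ M : Type*} [AddCommMonoid M] (w : τ → M) (j : σ → τ)
    (d : σ →₀ ℕ) : weight w (d.mapDomain j) = weight (w ∘ j) d := by
  simp only [weight_apply]
  exact sum_mapDomain_index (fun a => zero_smul ℕ (w a)) fun a b c => add_smul b c (w a)

end Finsupp

namespace MvPolynomial

section WeightedHomogeneous

variable {R σ τ M : Type*} [CommSemiring R] [AddCommMonoid M] {n : M}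

theorem IsWeightedHomogeneous.map {S : Type*} [CommSemiring S] (f : R →+* S) {w : σ → M}
    {p : MvPolynomial σ R} (h : p.IsWeightedHomogeneous w n) :
    (map f p).IsWeightedHomogeneous w n := fun d hd =>
  h fun h0 => hd (by rw [coeff_map, h0, map_zero])

theorem IsWeightedHomogeneous.rename {w : τ → M} (j : σ → τ) {p : MvPolynomial σ R}
    (h : p.IsWeightedHomogeneous (w ∘ j) n) : (rename j p).IsWeightedHomogeneous w n := by
  intro d hd
  obtain ⟨u, rfl, hu⟩ := coeff_rename_ne_zero j p d hd
  rw [Finsupp.weight_mapDomain, h hu]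

end WeightedHomogeneous

section BaseChange

variable {R A ι : Type*} [CommRing R] [CommRing A] [Algebra R A]
  (R' : Type*) [CommRing R'] [Algebra R R'] {val : ι → A}

theorem aeval_one_tmul_surjective (h : Function.Surjective (aeval (R := R) val)) :
    Function.Surjective (aeval (R := R') fun i => (1 : R') ⊗ₜ[R] val i) :=
  ((Algebra.Generators.ofSurjective val h).baseChange R').aeval_val_surjective

theorem ker_aeval_one_tmul (h : Function.Surjective (aeval (R := R) val)) :
    RingHom.ker (aeval (R := R') fun i => (1 : R') ⊗ₜ[R] val i) =
      (RingHom.ker (aeval (R := R) val)).map (map (algebraMap R R')) := by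
  let P : Algebra.Presentation R A ι (RingHom.ker (aeval (R := R) val)) :=
    { Algebra.Generators.ofSurjective val h with
      relation := Subtype.val
      span_range_relation_eq_ker := by
        rw [Subtype.range_coe, Ideal.span_eq, Algebra.Generators.ker_eq_ker_aeval_val]
        rfl }
  refine (P.span_range_relation_eq_ker_baseChange R').symm.trans ?_
  rw [Set.range_comp' (map (algebraMap R R')) Subtype.val, Subtype.range_coe, ← Ideal.map_span,
    Ideal.span_eq]

end BaseChange

section RedundantVariables

variable {R B σ τ : Type*} [CommRing R] [CommRing B] [Algebra R B]

theorem sub_aeval_mem_span_X_sub (f : σ → MvPolynomial σ R) (p : MvPolynomial σ R) :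
    p - aeval f p ∈ Ideal.span (Set.range fun i => X i - f i) := by
  set J := Ideal.span (Set.range fun i => X i - f i)
  have hmk : (Ideal.Quotient.mkₐ R J).comp (aeval f) = Ideal.Quotient.mkₐ R J :=
    algHom_ext fun i => by
      simpa using (Ideal.Quotient.eq.mpr (Ideal.subset_span ⟨i, rfl⟩ : X i - f i ∈ J)).symm
  exact Ideal.Quotient.eq.mp (AlgHom.congr_fun hmk p).symm

theorem ker_aeval_eq_map_rename_sup_span (g : τ → B) (j : σ → τ)
    (L : τ → MvPolynomial σ R) (hL : ∀ v, aeval (g ∘ j) (L v) = g v) :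
    RingHom.ker (aeval (R := R) g) = (RingHom.ker (aeval (g ∘ j))).map (rename j) ⊔
      Ideal.span (Set.range fun v => X v - rename j (L v)) := by
  have hspan : Ideal.span (Set.range fun v => X v - rename j (L v)) ≤ RingHom.ker (aeval g) := by
    rw [Ideal.span_le]
    rintro _ ⟨v, rfl⟩
    simp [aeval_rename, hL]
  refine le_antisymm (fun p hp => ?_) (sup_le ?_ hspan)
  · have hred := sub_aeval_mem_span_X_sub (fun v => rename j (L v)) p
    rw [← comp_aeval_apply] at hred
    have hq : aeval L p ∈ RingHom.ker (aeval (g ∘ j)) := by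
      have := hspan hred
      rwa [RingHom.mem_ker, map_sub, RingHom.mem_ker.mp hp, zero_sub, neg_eq_zero,
        aeval_rename, ← RingHom.mem_ker] at this
    rw [← sub_add_cancel p (rename j (aeval L p))]
    exact add_mem (Ideal.mem_sup_right hred) (Ideal.mem_sup_left (Ideal.mem_map_of_mem _ hq))
  · rw [Ideal.map_le_iff_le_comap]
    intro q hq
    simpa [aeval_rename] using hq

end RedundantVariables

end MvPolynomial

section BaseChangeGrading

variable {R A : Type*} [CommRing R] [CommRing A] [Algebra R A] (𝒜 : ℕ → Submodule R A)
  (t : ℕ) (R' : Type*) [CommRing R'] [Algebra R R']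

def baseChangeGrading (n : ℕ) : Submodule R' (R' ⊗[R] A) :=
  Submodule.span R' ((fun a => (1 : R') ⊗ₜ[R] a) '' (𝒜 n : Set A))

def PggVars.baseChange : PggVars 𝒜 t → PggVars (baseChangeGrading 𝒜 R') t :=
  fun v => ⟨v.1, (1 : R') ⊗ₜ[R] (v.2 : A), Submodule.subset_span ⟨v.2, v.2.2, rfl⟩⟩

theorem PggVars.coe_snd_comp_baseChange :
    (fun v : PggVars (baseChangeGrading 𝒜 R') t => (v.2 : R' ⊗[R] A)) ∘
        PggVars.baseChange 𝒜 t R' = fun u => (1 : R') ⊗ₜ[R] (u.2 : A) :=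
  rfl

theorem exists_isWeightedHomogeneous_aeval_one_tmul_eq
    (v : PggVars (baseChangeGrading 𝒜 R') t) :
    ∃ q : MvPolynomial (PggVars 𝒜 t) R', q.IsWeightedHomogeneous (pggWeight 𝒜 t) v.1 ∧
      aeval (fun u : PggVars 𝒜 t => (1 : R') ⊗ₜ[R] (u.2 : A)) q = v.2 := by
  have hle : baseChangeGrading 𝒜 R' v.1 ≤
      (weightedHomogeneousSubmodule R' (pggWeight 𝒜 t) v.1).map
        (aeval fun u : PggVars 𝒜 t => (1 : R') ⊗ₜ[R] (u.2 : A)).toLinearMap := by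
    rw [baseChangeGrading, Submodule.span_le]
    rintro _ ⟨a, ha, rfl⟩
    exact ⟨X ⟨v.1, a, ha⟩, isWeightedHomogeneous_X R' _ _, aeval_X _ _⟩
  exact hle v.2.2

end BaseChangeGrading

open TensorProduct in
theorem stmt11_general {R A : Type*} [CommRing R] [CommRing A] [Algebra R A]
    (𝒜 : ℕ → Submodule R A)
    (t : ℕ) (hpgg : IsPgg 𝒜 t)
    (R' : Type*) [CommRing R'] [Algebra R R'] :
    IsPgg (fun n => Submodule.span R'
      ((fun a => (1 : R') ⊗ₜ[R] a) '' (𝒜 n : Set A))) t := by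
  obtain ⟨hsurj, S, hShom, hSker⟩ := hpgg
  change IsPgg (baseChangeGrading 𝒜 R') t
  choose L hLhom hL using exists_isWeightedHomogeneous_aeval_one_tmul_eq 𝒜 t R'
  set j := PggVars.baseChange 𝒜 t R'
  have hker := ker_aeval_eq_map_rename_sup_span
    (fun v : PggVars (baseChangeGrading 𝒜 R') t => (v.2 : R' ⊗[R] A)) j L hL
  refine ⟨fun x => ?_, (fun s => rename j (map (algebraMap R R') s)) '' S ∪
    Set.range fun v => X v - rename j (L v), ?_, ?_⟩
  · obtain ⟨p, rfl⟩ := aeval_one_tmul_surjective R' hsurj x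
    exact ⟨rename j p, aeval_rename _ _ _⟩
  · rintro _ (⟨s, hs, rfl⟩ | ⟨v, rfl⟩)
    · obtain ⟨n, hn, hs⟩ := hShom s hs
      exact ⟨n, hn, (hs.map _).rename (w := pggWeight _ t) j⟩
    · exact ⟨v.1, v.1.2.2,
        (isWeightedHomogeneous_X R' _ v).sub ((hLhom v).rename (w := pggWeight _ t) j)⟩
  · rw [pggEval] at hSker ⊢
    rw [hker, PggVars.coe_snd_comp_baseChange, ker_aeval_one_tmul R' hsurj, hSker, Ideal.map_span,
      Ideal.map_span, ← Set.image_comp, Ideal.span_union]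
    rfl

open TensorProduct in
/-- **Proposition 5.16** (base change): if `A` is a `t`-pgg graded `R`-algebra and `R → R'`
is a ring homomorphism, then `A ⊗_R R'` (with degree-`n` component the `R'`-span of the image
of `𝒜 n`) is a `t`-pgg `R'`-algebra. -/
theorem stmt11 {R A : Type*} [CommRing R] [CommRing A] [Algebra R A]
    (𝒜 : ℕ → Submodule R A) [GradedAlgebra 𝒜]
    (h0 : 𝒜 0 = LinearMap.range (Algebra.linearMap R A))
    (t : ℕ) (ht : 1 ≤ t) (hpgg : IsPgg 𝒜 t)
    (R' : Type*) [CommRing R'] [Algebra R R'] :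
    IsPgg (fun n => Submodule.span R'
      ((fun a => (1 : R') ⊗ₜ[R] a) '' (𝒜 n : Set A))) t :=
  stmt11_general 𝒜 t hpgg R'
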